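/- (Sine Vandermonde identity / free Fermi ground state.) For every integer N ≥ 1 and all real numbers y₁, …, y_N, the determinant of the N×N matrix whose (i,j) entry is sin(j·y_i) (with i, j ranging over 1, …, N) equals 2^{N(N−1)/2} · (∏_{k=1}^{N} sin(y_k)) · ∏_{1≤i<j≤N} ( cos(y_j) − cos(y_i) ). -/

import Mathlib

/-!
Row `i` of the matrix is `sin yᵢ` times the values at `cos yᵢ` of the Chebyshev polynomials
`U₀, …, U_{N-1}` of the second kind, since `sin ((n + 1) y) = sin y · Uₙ (cos y)`.
As `Uₙ` has degree `n` and leading coefficient `2ⁿ`, column operations turn the remaining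
determinant into `2^(0 + 1 + ⋯ + (N - 1))` times the Vandermonde determinant of the `cos yᵢ`.
-/

open Real

open Polynomial Matrix in
theorem Matrix.det_eval_matrixOfPolynomials_eq_prod_coeff_mul_det_vandermonde
    {R : Type*} [CommRing R] {n : ℕ} (v : Fin n → R) (p : Fin n → R[X])
    (h_deg : ∀ i, (p i).natDegree ≤ i) :
    (of fun i j => (p j).eval (v i)).det = (∏ i, (p i).coeff i) * (vandermonde v).det := by
  rw [eval_matrixOfPolynomials_eq_vandermonde_mul_matrixOfPolynomials v p h_deg, det_mul,
    det_of_isUpperTriangular (matrixOfPolynomials_blockTriangular p h_deg), mul_comm]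
  rfl

theorem Finset.prod_filter_fst_lt_snd {α M : Type*} [Fintype α] [LinearOrder α]
    [LocallyFiniteOrderTop α] [CommMonoid M] (f : α → α → M) :
    ∏ p ∈ univ.filter (fun p : α × α => p.1 < p.2), f p.1 p.2 = ∏ i, ∏ j ∈ Ioi i, f i j := by
  rw [prod_filter, Fintype.prod_prod_type]
  refine prod_congr rfl fun i _ => ?_
  rw [← filter_lt_eq_Ioi, prod_filter]

theorem Fin.prod_pow_val {M : Type*} [CommMonoid M] (a : M) (n : ℕ) :
    ∏ j : Fin n, a ^ (j : ℕ) = a ^ (n * (n - 1) / 2) := by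
  rw [Finset.prod_pow_eq_pow_sum, Fin.sum_univ_eq_sum_range (fun i => i) n, Finset.sum_range_id]

theorem Real.sin_nat_succ_mul_eq_sin_mul_eval_U (n : ℕ) (x : ℝ) :
    sin ((n + 1) * x) = sin x * (Polynomial.Chebyshev.U ℝ n).eval (cos x) := by
  simpa [mul_comm] using (Polynomial.Chebyshev.U_real_cos x n).symm

open Polynomial Polynomial.Chebyshev Matrix in
theorem statement_11 (N : ℕ) (y : Fin N → ℝ) :
    Matrix.det (Matrix.of fun i j : Fin N => Real.sin (((j : ℕ) + 1) * y i)) =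
      2 ^ (N * (N - 1) / 2) * (∏ k, Real.sin (y k)) *
        ∏ p ∈ Finset.univ.filter (fun p : Fin N × Fin N => p.1 < p.2),
          (Real.cos (y p.2) - Real.cos (y p.1)) := by
  have h_factor : (of fun i j : Fin N => sin (((j : ℕ) + 1) * y i)).det =
      (∏ k, sin (y k)) * (of fun i (j : Fin N) => (U ℝ j).eval (cos (y i))).det := by
    rw [← det_mul_column]
    congr 1 with i j
    exact sin_nat_succ_mul_eq_sin_mul_eval_U j (y i)
  have h_coeff (j : ℕ) : (U ℝ j).coeff j = 2 ^ j := by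
    rw [← leadingCoeff_U_natCast, leadingCoeff, natDegree_U_natCast]
  rw [h_factor,
    det_eval_matrixOfPolynomials_eq_prod_coeff_mul_det_vandermonde _ _
      fun j => (natDegree_U_natCast ℝ j).le,
    Finset.prod_congr rfl fun (j : Fin N) _ => h_coeff j, Fin.prod_pow_val, det_vandermonde,
    Finset.prod_filter_fst_lt_snd fun i j => cos (y j) - cos (y i)]
  ring
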